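/- arXiv:0811.2522 — 2 statements merged into one kernel-verified Lean document; each statement's English description precedes it below -/
import Mathlib

section
/- Let N be a lattice of rank d, σ ⊂ N_ℝ a full-dimensional strongly convex rational polyhedral cone with primitive ray generators {e_α}, and ψ ∈ N*_ℚ a rational linear functional with ⟨ψ, e_α⟩ > 0 for all α. Suppose the subgroup ⟨ψ, N⟩ ⊆ ℚ equals (1/n)ℤ. Choose e ∈ N with ⟨ψ, e⟩ = 1/n and set Λ = N ∩ ker ψ. Then N = Λ ⊕ ℤe, and min{⟨ψ, v⟩ : v ∈ N ∩ int(σ)} = (1/n)·min{i ≥ 1 : Λ ∩ int(i·□) ≠ ∅}, where □ = Λ_ℝ ∩ (σ − e). -/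
/-!
Write `ψ v = m / n` for `v ∈ N`; then `v - m • e₀ ∈ Λ`, which gives `N = Λ ⊕ ℤ e₀`. Since `σ` is a
cone, radial projection from the origin identifies neighbourhoods of `v = x + m • e₀` in `σ` with
neighbourhoods of `x` in the hyperplane slice `m • □`, so `v ∈ int σ` iff `x ∈ relint (m • □)`.
Hence `ψ (N ∩ int σ)` is the image of the right-hand index set under `i ↦ i / n`; the index set is
nonempty because rounding a far-out point of the open cone `int σ` to the lattice stays inside it.
-/

open Set Pointwise Filter Topology Metric

section IntrinsicInterior

variable {E : Type*} [NormedAddCommGroup E] [NormedSpace ℝ E]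

theorem mem_intrinsicInterior_iff_of_affineSpan_eq {s : Set E} {P : AffineSubspace ℝ E}
    (hspan : affineSpan ℝ s = P) {x : E} :
    x ∈ intrinsicInterior ℝ s ↔ x ∈ P ∧ ∃ ε > 0, ∀ y ∈ P, dist y x < ε → y ∈ s := by
  subst hspan
  constructor
  · rintro ⟨y, hy, rfl⟩
    obtain ⟨ε, hε, hball⟩ := Metric.mem_nhds_iff.mp (mem_interior_iff_mem_nhds.mp hy)
    exact ⟨y.2, ε, hε, fun z hz hdist =>
      hball (show (⟨z, hz⟩ : affineSpan ℝ s) ∈ ball y ε from hdist)⟩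
  · rintro ⟨hx, ε, hε, h⟩
    refine ⟨⟨x, hx⟩, mem_interior.mpr ⟨ball ⟨x, hx⟩ ε, fun z hz => h z z.2 hz, isOpen_ball,
      mem_ball_self hε⟩, rfl⟩

theorem affineSpan_eq_of_ball_inter_subset {s : Set E} {P : AffineSubspace ℝ E}
    (hsP : s ⊆ P) {p : E} (hp : p ∈ P) {ε : ℝ} (hε : 0 < ε)
    (hball : ∀ y ∈ P, dist y p < ε → y ∈ s) : affineSpan ℝ s = P := by
  have hps : p ∈ affineSpan ℝ s := mem_affineSpan ℝ (hball p hp (by simpa using hε))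
  refine AffineSubspace.eq_of_direction_eq_of_nonempty_of_le
    (le_antisymm (AffineSubspace.direction_le (affineSpan_le.mpr hsP)) fun u hu => ?_)
    ⟨p, hps⟩ (affineSpan_le.mpr hsP)
  have hlim : Tendsto (fun t : ℝ => t • u + p) (𝓝[≠] 0) (𝓝 p) := by
    refine tendsto_nhdsWithin_of_tendsto_nhds ?_
    simpa using ((continuous_id.smul continuous_const).add continuous_const).tendsto (0 : ℝ)
      (f := fun t : ℝ => t • u + p)
  obtain ⟨t, ht, ht0⟩ := ((hlim.eventually (ball_mem_nhds p hε)).and self_mem_nhdsWithin).exists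
  have hmem : t • u + p ∈ P :=
    AffineSubspace.vadd_mem_of_mem_direction (P.direction.smul_mem t hu) hp
  have htu : t • u ∈ (affineSpan ℝ s).direction := by
    simpa using AffineSubspace.vsub_mem_direction (mem_affineSpan ℝ (hball _ hmem ht)) hps
  simpa [smul_smul, inv_mul_cancel₀ ht0] using (affineSpan ℝ s).direction.smul_mem t⁻¹ htu

end IntrinsicInterior

section NonnegCombinations

variable {E ι : Type*} [AddCommGroup E] [Module ℝ E] [Fintype ι] {e : ι → E} {σ : Set E}

theorem smul_mem_of_eq_nonneg_combinations
    (hσ : σ = {x | ∃ c : ι → ℝ, (∀ i, 0 ≤ c i) ∧ x = ∑ i, c i • e i}) :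
    ∀ t : ℝ, 0 < t → ∀ x ∈ σ, t • x ∈ σ := by
  subst hσ
  rintro t ht _ ⟨c, hc, rfl⟩
  exact ⟨fun i => t * c i, fun i => mul_nonneg ht.le (hc i),
    by simp [Finset.smul_sum, smul_smul]⟩

theorem apply_nonneg_of_eq_nonneg_combinations
    (hσ : σ = {x | ∃ c : ι → ℝ, (∀ i, 0 ≤ c i) ∧ x = ∑ i, c i • e i}) {ψ : E →ₗ[ℝ] ℝ}
    (hψ : ∀ i, 0 ≤ ψ (e i)) : ∀ x ∈ σ, 0 ≤ ψ x := by
  subst hσ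
  rintro _ ⟨c, hc, rfl⟩
  simpa using Finset.sum_nonneg fun i _ => mul_nonneg (hc i) (hψ i)

end NonnegCombinations

section Cone

variable {E : Type*} [NormedAddCommGroup E] [NormedSpace ℝ E] {σ : Set E} {ψ : E →ₗ[ℝ] ℝ}
  {w : E}

/-- The paper's `□ = ker ψ ∩ (σ - w)`. -/
def coneSlice (ψ : E →ₗ[ℝ] ℝ) (σ : Set E) (w : E) : Set E :=
  {x | ψ x = 0 ∧ x + w ∈ σ}

theorem smul_mem_interior_of_smul_mem (hσ : ∀ t : ℝ, 0 < t → ∀ x ∈ σ, t • x ∈ σ)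
    {t : ℝ} (ht : 0 < t) {x : E} (hx : x ∈ interior σ) : t • x ∈ interior σ := by
  have : t • interior σ ⊆ interior σ := by
    rw [← interior_smul₀ ht.ne']
    exact interior_mono (smul_set_subset_iff.mpr fun y hy => hσ t ht y hy)
  exact this (smul_mem_smul_set hx)

theorem smul_coneSlice (hσ : ∀ t : ℝ, 0 < t → ∀ x ∈ σ, t • x ∈ σ) {t : ℝ} (ht : 0 < t) :
    t • coneSlice ψ σ w = coneSlice ψ σ (t • w) := by
  ext x
  constructor
  · rintro ⟨y, ⟨hy, hyσ⟩, rfl⟩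
    refine ⟨by simp [hy], ?_⟩
    rw [← smul_add]
    exact hσ t ht _ hyσ
  · rintro ⟨hx, hxσ⟩
    refine ⟨t⁻¹ • x, ⟨by simp [hx], ?_⟩, smul_inv_smul₀ ht.ne' x⟩
    simpa [smul_add, inv_smul_smul₀ ht.ne'] using hσ t⁻¹ (inv_pos.mpr ht) _ hxσ

variable [FiniteDimensional ℝ E]

theorem pos_of_mem_interior_of_nonneg {s : Set E} (hψ : ψ ≠ 0)
    (hs : ∀ x ∈ s, 0 ≤ ψ x) {x : E} (hx : x ∈ interior s) : 0 < ψ x := by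
  have hopen : IsOpenMap ψ := ψ.isOpenMap_of_finiteDimensional (ψ.surjective_of_ne_zero hψ)
  have : x ∈ ψ ⁻¹' interior (Ici 0) :=
    hopen.preimage_interior_eq_interior_preimage ψ.continuous_of_finiteDimensional _ ▸
      interior_mono (fun y hy => hs y hy) hx
  simpa using this

/-- Radial projection from the origin identifies a neighbourhood of `x + w` in `σ` with a
neighbourhood of `x` in the slice. -/
theorem exists_ball_coneSlice_iff_mem_interior (hσ : ∀ t : ℝ, 0 < t → ∀ x ∈ σ, t • x ∈ σ)
    (hw : 0 < ψ w) {x : E} (hx : ψ x = 0) :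
    (∃ ε > 0, ∀ y, ψ y = 0 → dist y x < ε → y + w ∈ σ) ↔ x + w ∈ interior σ := by
  have hψxw : ψ (x + w) = ψ w := by simp [hx]
  constructor
  · rintro ⟨ε, hε, h⟩
    have hψc : Continuous ψ := ψ.continuous_of_finiteDimensional
    set f : E → E := fun u => (ψ w / ψ u) • u - w
    have hf : ContinuousAt f (x + w) :=
      ((continuousAt_const.div hψc.continuousAt (by rw [hψxw]; exact hw.ne')).smul
        continuousAt_id).sub continuousAt_const
    have hfx : f (x + w) = x := by simp [f, hψxw, hw.ne']
    have hnear : ∀ᶠ u in 𝓝 (x + w), dist (f u) x < ε ∧ 0 < ψ u :=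
      (hf.eventually (by rw [hfx]; exact ball_mem_nhds x hε)).and
        (hψc.continuousAt.eventually (lt_mem_nhds (hψxw ▸ hw)))
    refine mem_interior_iff_mem_nhds.mpr (hnear.mono fun u ⟨hu, hψu⟩ => ?_)
    have hfu : ψ (f u) = 0 := by simp [f, hψu.ne']
    have := hσ _ (inv_pos.mpr (div_pos hw hψu)) _ (by simpa [f] using h _ hfu hu)
    rwa [inv_smul_smul₀ (div_pos hw hψu).ne'] at this
  · intro hint
    obtain ⟨ε, hε, hball⟩ := Metric.mem_nhds_iff.mp (mem_interior_iff_mem_nhds.mp hint)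
    exact ⟨ε, hε, fun y _ hy => hball (by rwa [mem_ball, dist_add_right])⟩

theorem affineSpan_coneSlice (hσ : ∀ t : ℝ, 0 < t → ∀ x ∈ σ, t • x ∈ σ)
    (hz : ∃ z ∈ interior σ, 0 < ψ z) (hw : 0 < ψ w) :
    affineSpan ℝ (coneSlice ψ σ w) = (LinearMap.ker ψ).toAffineSubspace := by
  obtain ⟨z, hz, hψz⟩ := hz
  have hc : 0 < ψ w / ψ z := div_pos hw hψz
  have hp : ψ ((ψ w / ψ z) • z - w) = 0 := by simp [hψz.ne']
  obtain ⟨ε, hε, hball⟩ := (exists_ball_coneSlice_iff_mem_interior hσ hw hp).mpr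
    (by simpa using smul_mem_interior_of_smul_mem hσ hc hz)
  exact affineSpan_eq_of_ball_inter_subset (fun x hx => hx.1) hp hε
    fun y hy hdist => ⟨hy, hball y hy hdist⟩

theorem mem_intrinsicInterior_coneSlice_iff (hσ : ∀ t : ℝ, 0 < t → ∀ x ∈ σ, t • x ∈ σ)
    (hz : ∃ z ∈ interior σ, 0 < ψ z) (hw : 0 < ψ w) {x : E} (hx : ψ x = 0) :
    x ∈ intrinsicInterior ℝ (coneSlice ψ σ w) ↔ x + w ∈ interior σ := by
  rw [mem_intrinsicInterior_iff_of_affineSpan_eq (affineSpan_coneSlice hσ hz hw),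
    ← exists_ball_coneSlice_iff_mem_interior hσ hw hx]
  simp +contextual [coneSlice, hx]

theorem mem_intrinsicInterior_smul_coneSlice_iff (hσ : ∀ t : ℝ, 0 < t → ∀ x ∈ σ, t • x ∈ σ)
    (hz : ∃ z ∈ interior σ, 0 < ψ z) (hw : 0 < ψ w) {t : ℝ} (ht : 0 < t) {x : E}
    (hx : ψ x = 0) :
    x ∈ intrinsicInterior ℝ (t • coneSlice ψ σ w) ↔ x + t • w ∈ interior σ := by
  rw [smul_coneSlice hσ ht]
  exact mem_intrinsicInterior_coneSlice_iff hσ hz (by simpa using mul_pos ht hw) hx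

end Cone

theorem exists_mem_span_int_inter_interior {E ι : Type*} [NormedAddCommGroup E] [NormedSpace ℝ E]
    [Fintype ι] (b : Module.Basis ι ℝ E) {σ : Set E}
    (hσ : ∀ t : ℝ, 0 < t → ∀ x ∈ σ, t • x ∈ σ) (hint : (interior σ).Nonempty) :
    ∃ v ∈ Submodule.span ℤ (Set.range b), v ∈ interior σ := by
  obtain ⟨z, hz⟩ := hint
  obtain ⟨ε, hε, hball⟩ := Metric.isOpen_iff.mp isOpen_interior z hz
  set t : ℝ := (∑ i, ‖b i‖ + 1) / ε
  have ht : 0 < t := by positivity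
  have hsub : t • ball z ε ⊆ interior σ :=
    smul_set_subset_iff.mpr fun y hy => smul_mem_interior_of_smul_mem hσ ht (hball hy)
  refine ⟨ZSpan.floor b (t • z), (ZSpan.floor b (t • z)).2, hsub ?_⟩
  rw [_root_.smul_ball ht.ne', mem_ball, dist_comm, dist_eq_norm, ← ZSpan.fract_apply,
    Real.norm_of_nonneg ht.le, div_mul_cancel₀ _ hε.ne']
  linarith [ZSpan.norm_fract_le b (t • z)]

section Decomposition

variable {E : Type*} [AddCommGroup E] [Module ℝ E] {N : AddSubgroup E} {ψ : E →ₗ[ℝ] ℝ}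
  {n : ℕ} {e₀ : E}

theorem exists_int_sub_smul_mem_ker (hval : ∀ v ∈ N, ∃ m : ℤ, ψ v = m / n) (he₀ : e₀ ∈ N)
    (hψe₀ : ψ e₀ = 1 / n) {v : E} (hv : v ∈ N) :
    ∃ m : ℤ, ψ v = m / n ∧ v - (m : ℝ) • e₀ ∈ N ∧ ψ (v - (m : ℝ) • e₀) = 0 := by
  obtain ⟨m, hm⟩ := hval v hv
  refine ⟨m, hm, N.sub_mem hv ?_, by simp [hm, hψe₀, div_eq_mul_one_div (m : ℝ)]⟩
  rw [Int.cast_smul_eq_zsmul]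
  exact N.zsmul_mem he₀ m

theorem eq_of_add_smul_eq_add_smul (hψe₀ : ψ e₀ ≠ 0) {x x' : E} {m m' : ℝ} (hx : ψ x = 0)
    (hx' : ψ x' = 0) (h : x + m • e₀ = x' + m' • e₀) : x = x' ∧ m = m' := by
  have hm : m = m' := by
    simpa [hx, hx', hψe₀] using congrArg ψ h
  subst hm
  exact ⟨add_right_cancel h, rfl⟩

theorem existsUnique_add_int_smul (hval : ∀ v ∈ N, ∃ m : ℤ, ψ v = m / n) (he₀ : e₀ ∈ N)
    (hψe₀ : ψ e₀ = 1 / n) (hn : 0 < n) {v : E} (hv : v ∈ N) :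
    ∃! pr : E × ℤ, pr.1 ∈ {x | x ∈ N ∧ ψ x = 0} ∧ v = pr.1 + (pr.2 : ℝ) • e₀ := by
  obtain ⟨m, -, hxN, hxψ⟩ := exists_int_sub_smul_mem_ker hval he₀ hψe₀ hv
  refine ⟨(v - (m : ℝ) • e₀, m), ⟨⟨hxN, hxψ⟩, by simp⟩, ?_⟩
  rintro ⟨x, m'⟩ ⟨⟨-, hx⟩, hvx⟩
  have hψe₀ : ψ e₀ ≠ 0 := by rw [hψe₀]; positivity
  obtain ⟨hxx, hmm⟩ :=
    eq_of_add_smul_eq_add_smul hψe₀ hx hxψ (hvx.symm.trans (sub_add_cancel v _).symm)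
  exact Prod.ext hxx (by exact_mod_cast hmm)

end Decomposition

theorem setOf_apply_eq_image_div {E : Type*} [NormedAddCommGroup E] [NormedSpace ℝ E]
    [FiniteDimensional ℝ E] {σ : Set E} {ψ : E →ₗ[ℝ] ℝ} {N : AddSubgroup E} {n : ℕ} {e₀ : E}
    (hσ : ∀ t : ℝ, 0 < t → ∀ x ∈ σ, t • x ∈ σ) (hψσ : ∀ x ∈ σ, 0 ≤ ψ x)
    (hint : (interior σ).Nonempty) (hval : ∀ v ∈ N, ∃ m : ℤ, ψ v = m / n) (he₀ : e₀ ∈ N)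
    (hψe₀ : ψ e₀ = 1 / n) (hn : 0 < n) :
    {r : ℝ | ∃ v, v ∈ N ∧ v ∈ interior σ ∧ r = ψ v} =
      (fun i : ℕ => (i : ℝ) / n) '' {i : ℕ | 1 ≤ i ∧
        ∃ x ∈ {x | x ∈ N ∧ ψ x = 0}, x ∈ intrinsicInterior ℝ ((i : ℝ) • coneSlice ψ σ e₀)} := by
  have hψe₀_pos : 0 < ψ e₀ := by rw [hψe₀]; positivity
  have hpos : ∀ x ∈ interior σ, 0 < ψ x :=
    fun x => pos_of_mem_interior_of_nonneg (fun h => by simp [h] at hψe₀_pos) hψσ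
  have hkey : ∀ i : ℕ, 1 ≤ i → ∀ x, ψ x = 0 →
      (x ∈ intrinsicInterior ℝ ((i : ℝ) • coneSlice ψ σ e₀) ↔ x + (i : ℝ) • e₀ ∈ interior σ) :=
    fun i hi x hx => mem_intrinsicInterior_smul_coneSlice_iff hσ
      (hint.elim fun z hz => ⟨z, hz, hpos z hz⟩) hψe₀_pos (by exact_mod_cast hi) hx
  ext r
  constructor
  · rintro ⟨v, hvN, hvint, rfl⟩
    obtain ⟨m, hm, hxN, hxψ⟩ := exists_int_sub_smul_mem_ker hval he₀ hψe₀ hvN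
    have hm0 : 0 < m := by
      have := hpos v hvint
      rw [hm] at this
      exact_mod_cast (div_pos_iff_of_pos_right (by positivity)).mp this
    lift m to ℕ using hm0.le
    refine ⟨m, ⟨by omega, _, ⟨hxN, hxψ⟩, (hkey m (by omega) _ hxψ).mpr (by simpa using hvint)⟩,
      by simpa using hm.symm⟩
  · rintro ⟨i, ⟨hi, x, ⟨hxN, hxψ⟩, hx⟩, rfl⟩
    refine ⟨x + (i : ℝ) • e₀, N.add_mem hxN ?_, (hkey i hi x hxψ).mp hx,
      by simp [hxψ, hψe₀, div_eq_mul_inv]⟩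
    rw [Nat.cast_smul_eq_nsmul]
    exact N.nsmul_mem he₀ i

theorem toric_mld_via_slice_general
    (d : ℕ)
    (b : Module.Basis (Fin d) ℝ (Fin d → ℝ))
    (N : Set (Fin d → ℝ))
    (hN : N = (Submodule.span ℤ (Set.range b) : Submodule ℤ (Fin d → ℝ)))
    (k : ℕ) (e : Fin k → (Fin d → ℝ))
    (σ : Set (Fin d → ℝ))
    (hσ : σ = {x | ∃ c : Fin k → ℝ, (∀ i, 0 ≤ c i) ∧ x = ∑ i, c i • e i})
    (hfull : (interior σ).Nonempty)
    (ψ : (Fin d → ℝ) →ₗ[ℝ] ℝ)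
    (hψpos : ∀ α, 0 < ψ (e α))
    (n : ℕ) (hn : 0 < n)
    (himg : {r : ℝ | ∃ x ∈ N, ψ x = r} = {r : ℝ | ∃ m : ℤ, r = (m : ℝ) / n})
    (e₀ : Fin d → ℝ) (he₀ : e₀ ∈ N) (hψe₀ : ψ e₀ = 1 / n)
    (Λ : Set (Fin d → ℝ)) (hΛ : Λ = {x | x ∈ N ∧ ψ x = 0})
    (Q : Set (Fin d → ℝ)) (hQ : Q = {x | ψ x = 0 ∧ x + e₀ ∈ σ}) :
    (∀ v ∈ N, ∃! pr : (Fin d → ℝ) × ℤ, pr.1 ∈ Λ ∧ v = pr.1 + (pr.2 : ℝ) • e₀) ∧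
    sInf {r : ℝ | ∃ v, v ∈ N ∧ v ∈ interior σ ∧ r = ψ v}
      = (1 / n) *
        (sInf {i : ℕ | 1 ≤ i ∧ ∃ x ∈ Λ, x ∈ intrinsicInterior ℝ ((i : ℝ) • Q)} : ℕ) := by
  obtain ⟨L, rfl⟩ : ∃ L : AddSubgroup (Fin d → ℝ), N = L :=
    ⟨(Submodule.span ℤ (Set.range b)).toAddSubgroup, hN⟩
  subst hΛ hQ
  simp only [SetLike.mem_coe] at himg he₀ ⊢
  have hval : ∀ v ∈ L, ∃ m : ℤ, ψ v = m / n := fun v hv => himg.subset ⟨v, hv, rfl⟩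
  have hcone := smul_mem_of_eq_nonneg_combinations hσ
  have hψσ := apply_nonneg_of_eq_nonneg_combinations hσ fun α => (hψpos α).le
  refine ⟨fun v hv => existsUnique_add_int_smul hval he₀ hψe₀ hn hv, ?_⟩
  have hvalues := setOf_apply_eq_image_div hcone hψσ hfull hval he₀ hψe₀ hn
  obtain ⟨v, hvL, hvint⟩ := exists_mem_span_int_inter_interior b hcone hfull
  rw [← SetLike.mem_coe, ← hN, SetLike.mem_coe] at hvL
  obtain ⟨i, hi, -⟩ := hvalues.subset ⟨v, hvL, hvint, rfl⟩
  have hmono : Monotone fun i : ℕ => (i : ℝ) / n := fun i j hij =>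
    div_le_div_of_nonneg_right (Nat.cast_le.mpr hij) n.cast_nonneg
  rw [show {x | ψ x = 0 ∧ x + e₀ ∈ σ} = coneSlice ψ σ e₀ from rfl, hvalues,
    ← hmono.map_csInf_of_continuousAt continuous_of_discreteTopology.continuousAt ⟨i, hi⟩,
    one_div_mul_eq_div]

/-- Let `N = span ℤ (range b)` be a full lattice of rank `d` in `ℝ^d`,
`σ` a full-dimensional strongly convex rational polyhedral cone with primitive ray
generators `e α ∈ N`, and `ψ` a linear functional positive on the `e α`, with
`⟨ψ, N⟩ = (1/n)ℤ`. Choose `e₀ ∈ N` with `ψ e₀ = 1/n` and let `Λ = N ∩ ker ψ`.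
Then `N = Λ ⊕ ℤ e₀` and
`min {ψ v : v ∈ N ∩ int σ} = (1/n) · min {i ≥ 1 : Λ ∩ relint(i·Q) ≠ ∅}`,
where `Q = ker ψ ∩ (σ - e₀)`. -/
theorem toric_mld_via_slice
    (d : ℕ) (hd : 0 < d)
    (b : Module.Basis (Fin d) ℝ (Fin d → ℝ))
    (N : Set (Fin d → ℝ))
    (hN : N = (Submodule.span ℤ (Set.range b) : Submodule ℤ (Fin d → ℝ)))
    (k : ℕ) (e : Fin k → (Fin d → ℝ))
    (he : ∀ α, e α ∈ N)
    (heprim : ∀ α, ∀ m : ℕ, 2 ≤ m → ¬ ∃ y ∈ N, e α = (m : ℝ) • y)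
    (σ : Set (Fin d → ℝ))
    (hσ : σ = {x | ∃ c : Fin k → ℝ, (∀ i, 0 ≤ c i) ∧ x = ∑ i, c i • e i})
    (hfull : (interior σ).Nonempty)
    (hstrong : σ ∩ (-σ) = {0})
    (ψ : (Fin d → ℝ) →ₗ[ℝ] ℝ)
    (hψpos : ∀ α, 0 < ψ (e α))
    (n : ℕ) (hn : 0 < n)
    (himg : {r : ℝ | ∃ x ∈ N, ψ x = r} = {r : ℝ | ∃ m : ℤ, r = (m : ℝ) / n})
    (e₀ : Fin d → ℝ) (he₀ : e₀ ∈ N) (hψe₀ : ψ e₀ = 1 / n)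
    (Λ : Set (Fin d → ℝ)) (hΛ : Λ = {x | x ∈ N ∧ ψ x = 0})
    (Q : Set (Fin d → ℝ)) (hQ : Q = {x | ψ x = 0 ∧ x + e₀ ∈ σ}) :
    (∀ v ∈ N, ∃! pr : (Fin d → ℝ) × ℤ, pr.1 ∈ Λ ∧ v = pr.1 + (pr.2 : ℝ) • e₀) ∧
    sInf {r : ℝ | ∃ v, v ∈ N ∧ v ∈ interior σ ∧ r = ψ v}
      = (1 / n) *
        (sInf {i : ℕ | 1 ≤ i ∧ ∃ x ∈ Λ, x ∈ intrinsicInterior ℝ ((i : ℝ) • Q)} : ℕ) :=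
  toric_mld_via_slice_general d b N hN k e σ hσ hfull ψ hψpos n hn himg e₀ he₀ hψe₀ Λ hΛ Q hQ
end

section
/- For d = 2 (so lattices of rank 1 in the slice): under the hypotheses of the main theorem with d = 2, one may take c_2 = 2; that is, if Λ ≅ ℤ, S = [a, b] ⊂ ℝ is an interval with endpoints in (1/q)ℤ containing exactly one point of ℤ in its interior, and j ≥ 1 is an integer such that the cone over {j} × S with vertex 0 contains no point of ℤ × ℤ in its interior, then j ≤ 2q. -/
/-!
Suppose `j > 2q`. The cone contains, in its interior, every integer point `(u, y)` with
`0 < u < j` and `a u < j y < b u`. Since `a ≤ z - 1/q` and `z + 1/q ≤ b`, it suffices that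
`q |z u - j y| < u`. If `d = gcd(z, j) > 1`, take `(u, y) = (j/d, z/d)`, so `z u - j y = 0`.
Otherwise `z` is invertible mod `j`, and of the two residues `u` and `j - u` with
`z u ≡ ±1 (mod j)` one exceeds `q`, because they add up to `j ≥ 2q + 1`.
-/

open Set Topology

namespace Int

lemma exists_abs_mul_sub_mul_eq_one {z j q : ℤ} (hq : 0 < q) (hj : 2 * q + 1 ≤ j)
    (hcop : IsCoprime z j) : ∃ u y : ℤ, q < u ∧ u < j ∧ |z * u - j * y| = 1 := by
  obtain ⟨s, t, hst⟩ := hcop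
  have hj0 : 0 < j := by omega
  set u := s % j
  set y := -t - z * (s / j)
  have hzu : z * u - j * y = 1 := by
    have := emod_add_mul_ediv s j
    linear_combination z * this + hst
  have hu_pos : 0 < u := by
    refine lt_of_le_of_ne (emod_nonneg s hj0.ne') fun hu0 => ?_
    have : j ∣ 1 := ⟨-y, by rw [← hu0] at hzu; linarith⟩
    have := le_of_dvd one_pos this
    omega
  have hu_lt : u < j := emod_lt_of_pos s hj0
  by_cases hqu : q < u
  · exact ⟨u, y, hqu, hu_lt, by simp [hzu]⟩
  · refine ⟨j - u, z - y, by omega, by omega, ?_⟩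
    rw [show z * (j - u) - j * (z - y) = -1 by linear_combination -hzu]
    simp

/-- A Diophantine approximation of `z / j` by a fraction with denominator below `j`,
with error less than `1 / (q j)`. -/
lemma exists_mul_abs_mul_sub_mul_lt (z : ℤ) {j q : ℤ} (hq : 0 < q) (hj : 2 * q + 1 ≤ j) :
    ∃ u y : ℤ, 0 < u ∧ u < j ∧ q * |z * u - j * y| < u := by
  by_cases hcop : IsCoprime z j
  · obtain ⟨u, y, hqu, huj, hzu⟩ := exists_abs_mul_sub_mul_eq_one hq hj hcop
    exact ⟨u, y, by omega, huj, by rw [hzu]; omega⟩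
  · set d := (z.gcd j : ℤ)
    have hd : 2 ≤ d := by
      have := gcd_pos_of_ne_zero_right z (show j ≠ 0 by omega)
      have := mt isCoprime_iff_gcd_eq_one.2 hcop
      omega
    obtain ⟨u, hu⟩ := gcd_dvd_right z j
    obtain ⟨y, hy⟩ := gcd_dvd_left z j
    have hu_pos : 0 < u := pos_of_mul_pos_right (hu ▸ (by omega : 0 < j)) (by omega)
    refine ⟨u, y, hu_pos, by nlinarith, ?_⟩
    rw [show z * u - j * y = 0 by linear_combination u * hy - y * hu]
    simpa using hu_pos

/-- If `z` lies strictly between `m / q` and `n / q`, so does every `j y / u` with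
`q |z u - j y| < u`. -/
lemma lt_mul_and_mul_lt_of_mul_abs_lt {m n q z j u y : ℤ} (hm : m < z * q) (hn : z * q < n)
    (hq : 0 < q) (happrox : q * |z * u - j * y| < u) :
    m * u < q * (j * y) ∧ q * (j * y) < n * u := by
  have hu : 0 < u := lt_of_le_of_lt (by positivity) happrox
  have hle := mul_le_mul_of_nonneg_left (le_abs_self (z * u - j * y)) hq.le
  have hge := mul_le_mul_of_nonneg_left (neg_abs_le (z * u - j * y)) hq.le
  constructor
  · nlinarith [mul_le_mul_of_nonneg_right (by omega : m ≤ z * q - 1) hu.le]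
  · nlinarith [mul_le_mul_of_nonneg_right (by omega : z * q + 1 ≤ n) hu.le]

end Int

def coneOverSegment (h a b : ℝ) : Set (ℝ × ℝ) :=
  {p | ∃ t ∈ Icc (0 : ℝ) 1, ∃ x ∈ Icc a b, p = t • ((h, x) : ℝ × ℝ)}

lemma mem_coneOverSegment {h a b x y : ℝ} (hh : 0 < h) (h₀ : 0 < x) (h₁ : x ≤ h)
    (ha : a * x ≤ h * y) (hb : h * y ≤ b * x) : (x, y) ∈ coneOverSegment h a b := by
  refine ⟨x / h, ⟨by positivity, (div_le_one hh).2 h₁⟩,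
    h * y / x, ⟨(le_div_iff₀ h₀).2 ha, (div_le_iff₀ h₀).2 hb⟩, ?_⟩
  simp only [Prod.smul_mk, smul_eq_mul, Prod.mk.injEq]
  constructor <;> field_simp

lemma mem_interior_coneOverSegment {h a b x y : ℝ} (hh : 0 < h) (h₀ : 0 < x) (h₁ : x < h)
    (ha : a * x < h * y) (hb : h * y < b * x) :
    (x, y) ∈ interior (coneOverSegment h a b) := by
  have hcont₁ : Continuous fun p : ℝ × ℝ => p.1 := continuous_fst
  have hcont₂ : Continuous fun p : ℝ × ℝ => p.2 := continuous_snd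
  have hnear : ∀ᶠ p in 𝓝 (x, y),
      0 < p.1 ∧ p.1 < h ∧ a * p.1 < h * p.2 ∧ h * p.2 < b * p.1 :=
    (continuousAt_const.eventually_lt hcont₁.continuousAt h₀).and <|
      (hcont₁.continuousAt.eventually_lt continuousAt_const h₁).and <|
      ((continuousAt_const.mul hcont₁.continuousAt).eventually_lt
        (continuousAt_const.mul hcont₂.continuousAt) ha).and <|
      (continuousAt_const.mul hcont₂.continuousAt).eventually_lt
        (continuousAt_const.mul hcont₁.continuousAt) hb
  exact mem_interior_iff_mem_nhds.2 <| hnear.mono fun p ⟨h₀, h₁, ha, hb⟩ =>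
    mem_coneOverSegment hh h₀ h₁.le ha.le hb.le

theorem dimension_two_bound_general
    (q : ℕ) (hq : 1 ≤ q)
    (a bb : ℝ)
    (ha : ∃ m : ℤ, a = (m : ℝ) / q) (hb : ∃ m : ℤ, bb = (m : ℝ) / q)
    (z : ℤ) (hz : {x : ℝ | ∃ m : ℤ, x = (m : ℝ)} ∩ Set.Ioo a bb = {(z : ℝ)})
    (j : ℕ)
    (C : Set (ℝ × ℝ))
    (hC : C = {p | ∃ t ∈ Set.Icc (0:ℝ) 1, ∃ x ∈ Set.Icc a bb,
      p = t • (((j : ℝ), x) : ℝ × ℝ)})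
    (hlat : interior C ∩
      {p : ℝ × ℝ | (∃ m : ℤ, p.1 = (m : ℝ)) ∧ ∃ m : ℤ, p.2 = (m : ℝ)} = ∅) :
    j ≤ 2 * q := by
  by_contra! hjq
  obtain ⟨m, rfl⟩ := ha
  obtain ⟨n, rfl⟩ := hb
  have hq₀ : (0 : ℝ) < q := by exact_mod_cast hq
  have hz_mem : (z : ℝ) ∈ Ioo ((m : ℝ) / q) ((n : ℝ) / q) := (hz ▸ mem_singleton (z : ℝ)).2
  have hm : m < z * q := by exact_mod_cast (div_lt_iff₀ hq₀).1 hz_mem.1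
  have hn : z * q < n := by exact_mod_cast (lt_div_iff₀ hq₀).1 hz_mem.2
  obtain ⟨u, y, hu₀, huj, happrox⟩ :=
    Int.exists_mul_abs_mul_sub_mul_lt z (j := j) (q := q) (by omega) (by omega)
  obtain ⟨hmu, hnu⟩ := Int.lt_mul_and_mul_lt_of_mul_abs_lt hm hn (by omega) happrox
  have hinterior : ((u : ℝ), (y : ℝ)) ∈ interior C := by
    subst hC
    refine mem_interior_coneOverSegment (by exact_mod_cast (by omega : 0 < j))
      (by exact_mod_cast hu₀) (by exact_mod_cast huj) ?_ ?_
    · rw [div_mul_eq_mul_div, div_lt_iff₀ hq₀]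
      exact_mod_cast (by linarith : m * u < j * y * q)
    · rw [div_mul_eq_mul_div, lt_div_iff₀ hq₀]
      exact_mod_cast (by linarith : j * y * q < n * u)
  exact hlat.subset ⟨hinterior, ⟨u, rfl⟩, ⟨y, rfl⟩⟩

/-- **the case `d = 2`, `c₂ = 2`.** If `S = [a, bb] ⊂ ℝ` has endpoints in
`(1/q)ℤ` and contains exactly one integer in its interior, and `j ≥ 1` is an integer such
that the cone over `{j} × S` with vertex `0` contains no point of `ℤ × ℤ` in its
interior, then `j ≤ 2q`. -/
theorem dimension_two_bound
    (q : ℕ) (hq : 1 ≤ q)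
    (a bb : ℝ) (hab : a < bb)
    (ha : ∃ m : ℤ, a = (m : ℝ) / q) (hb : ∃ m : ℤ, bb = (m : ℝ) / q)
    (z : ℤ) (hz : {x : ℝ | ∃ m : ℤ, x = (m : ℝ)} ∩ Set.Ioo a bb = {(z : ℝ)})
    (j : ℕ) (hj : 1 ≤ j)
    (C : Set (ℝ × ℝ))
    (hC : C = {p | ∃ t ∈ Set.Icc (0:ℝ) 1, ∃ x ∈ Set.Icc a bb,
      p = t • (((j : ℝ), x) : ℝ × ℝ)})
    (hlat : interior C ∩
      {p : ℝ × ℝ | (∃ m : ℤ, p.1 = (m : ℝ)) ∧ ∃ m : ℤ, p.2 = (m : ℝ)} = ∅) :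
    j ≤ 2 * q :=
  dimension_two_bound_general q hq a bb ha hb z hz j C hC hlat
end
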